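/- Let d ≥ 2 and let ν : 2^D → ℝ be a cooperative game on D = {1,…,d} with ν(∅) = 0 whose Möbius transform vanishes above order 2, i.e., ν(S) = Σ_{T ⊆ S, 1 ≤ |T| ≤ 2} m(T) for all S, where m is the Möbius transform of ν. Given a paired weighted sample (S_1,w_1),…,(S_{2r},w_{2r}) such that X̃_{≤2} has full column rank, the unique minimizer φ̂ of ‖X̃_1 φ − ỹ‖₂² over {φ ∈ ℝ^d : ⟨φ,𝟙⟩ = ν(D)} satisfies φ̂_i = φ_i^SV[ν] for every i ∈ D; that is, paired KernelSHAP exactly recovers the Shapley values of games with interactions of order at most 2. -/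

import Mathlib

/-!
Write `ν = ∑_T m(T) u_T` with unanimity games `u_T(S) = [T ⊆ S]`. The identity
`∑_{A ⊆ S ⊆ E} 1 / C(|E|, |S|) = (|E| + 1) / (|A| + 1)` gives `φ^SV[u_T]_i = [i ∈ T] / |T|`,
so `ψ := φ^SV[ν]` is efficient, and when every `|T| ≤ 2` its excess `e(A) = ∑_{i ∈ A} ψ_i - ν(A)`
satisfies `e(Aᶜ) = e(A)` (a pair `T` contributes `1/2` exactly when `A` separates it, a singleton
contributes nothing). Since each player lies in exactly one of `S_j`, `S_jᶜ`, every coordinate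
of the gradient `X̃₁ᵀ (X̃₁ ψ - ỹ)` equals `∑_j w_j e(S_j)`. That is the Lagrange condition for the
constraint `∑ χ = ν(D)`, so on the constraint set
`‖X̃₁ χ - ỹ‖² = ‖X̃₁ ψ - ỹ‖² + ‖X̃₁ (χ - ψ)‖²`. The minimiser `φ` thus has `X̃₁ (φ - ψ) = 0`,
and the columns of `X̃₁` are independent, being columns of `X̃_{≤2}`.
-/

open Finset Matrix

/-- Shapley value of player `i` in the game `ν` on `D = Fin d`. -/
noncomputable def shapley (d : ℕ) (ν : Finset (Fin d) → ℝ) (i : Fin d) : ℝ :=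
  (1 / (d : ℝ)) * ∑ S ∈ ((Finset.univ : Finset (Fin d)).erase i).powerset,
    (ν (insert i S) - ν S) / ((d - 1).choose S.card : ℝ)

/-- Möbius transform `m(S) = Σ_{L ⊆ S} (−1)^{|S|−|L|}·ν(L)`. -/
noncomputable def moebius (d : ℕ) (ν : Finset (Fin d) → ℝ) (S : Finset (Fin d)) : ℝ :=
  ∑ L ∈ S.powerset, (-1 : ℝ) ^ (S.card - L.card) * ν L

/-- Design matrix `X̃_{≤2}` of a weighted sample. -/
noncomputable def X2mat (d r : ℕ) (S : Fin r × Bool → Finset (Fin d))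
    (w : Fin r × Bool → ℝ) :
    Matrix (Fin r × Bool) {T : Finset (Fin d) // T.Nonempty ∧ T.card ≤ 2} ℝ :=
  fun ℓ T => Real.sqrt (w ℓ) * (if (T : Finset (Fin d)) ⊆ S ℓ then 1 else 0)

/-- Design matrix `X̃_1` of a weighted sample. -/
noncomputable def X1mat (d r : ℕ) (S : Fin r × Bool → Finset (Fin d))
    (w : Fin r × Bool → ℝ) :
    Matrix (Fin r × Bool) (Fin d) ℝ :=
  fun ℓ i => Real.sqrt (w ℓ) * (if i ∈ S ℓ then 1 else 0)

/-- Target vector `ỹ` with entries `√(w_ℓ)·ν(S_ℓ)`. -/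
noncomputable def yvec (d r : ℕ) (ν : Finset (Fin d) → ℝ)
    (S : Fin r × Bool → Finset (Fin d)) (w : Fin r × Bool → ℝ) :
    Fin r × Bool → ℝ :=
  fun ℓ => Real.sqrt (w ℓ) * ν (S ℓ)

section Combinatorics

variable {α : Type*} [DecidableEq α]

theorem sum_powerset_filter_superset_apply_card {M : Type*} [AddCommMonoid M] (f : ℕ → M)
    {A E : Finset α} (hAE : A ⊆ E) :
    ∑ S ∈ E.powerset with A ⊆ S, f #S =
      ∑ k ∈ range (#E - #A + 1), (#E - #A).choose k • f (#A + k) := by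
  have hIcc : {S ∈ E.powerset | A ⊆ S} = Icc A E := by
    ext S; simp [and_comm]
  have hinj : Set.InjOn (A ∪ ·) ((E \ A).powerset : Set (Finset α)) := by
    intro B hB B' hB' h
    simp only [coe_powerset, Set.mem_preimage, Set.mem_powerset_iff, coe_subset] at hB hB'
    rw [← union_sdiff_cancel_left (disjoint_of_subset_left hB sdiff_disjoint).symm,
      ← union_sdiff_cancel_left (disjoint_of_subset_left hB' sdiff_disjoint).symm]
    exact congrArg (· \ A) h
  rw [hIcc, Icc_eq_image_powerset hAE, sum_image hinj, ← card_sdiff_of_subset hAE,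
    ← sum_powerset_apply_card (fun k => f (#A + k))]
  refine sum_congr rfl fun B hB => ?_
  rw [card_union_of_disjoint (disjoint_of_subset_right (mem_powerset.1 hB) disjoint_sdiff)]

theorem sum_range_choose_div_choose_add (a p : ℕ) :
    ∑ k ∈ range (p + 1), (p.choose k : ℝ) / (a + p).choose (a + k) =
      ((a + p + 1 : ℕ) : ℝ) / (a + 1 : ℕ) := by
  have hpos : (0 : ℝ) < (a + p).choose a := by exact_mod_cast Nat.choose_pos (by omega)
  have hterm : ∀ k ∈ range (p + 1),
      (p.choose k : ℝ) / (a + p).choose (a + k) = (k + a).choose a / (a + p).choose a := by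
    intro k hk
    have hk : k ≤ p := Nat.lt_succ_iff.1 (mem_range.1 hk)
    have hmul := Nat.choose_mul (n := a + p) (k := a + k) (s := a) (by omega)
    rw [show a + p - a = p by omega, show a + k - a = k by omega] at hmul
    have hne : ((a + p).choose (a + k) : ℝ) ≠ 0 := by
      exact_mod_cast (Nat.choose_pos (by omega)).ne'
    rw [div_eq_div_iff hne hpos.ne', add_comm k a]
    exact_mod_cast (by linarith [hmul] :
      p.choose k * (a + p).choose a = (a + k).choose a * (a + p).choose (a + k))
  rw [sum_congr rfl hterm, ← sum_div, ← Nat.cast_sum, Nat.sum_range_add_choose,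
    div_eq_div_iff hpos.ne' (by positivity), add_comm p a]
  exact_mod_cast (Nat.add_one_mul_choose_eq (a + p) a).symm

theorem sum_powerset_filter_superset_inv_choose {A E : Finset α} (hAE : A ⊆ E) :
    ∑ S ∈ E.powerset with A ⊆ S, ((#E).choose #S : ℝ)⁻¹ = (#E + 1) / (#A + 1) := by
  obtain ⟨p, hp⟩ : ∃ p, #E = #A + p := ⟨#E - #A, by have := card_le_card hAE; omega⟩
  rw [sum_powerset_filter_superset_apply_card (fun k => ((#E).choose k : ℝ)⁻¹) hAE, hp,
    Nat.add_sub_cancel_left]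
  simp only [nsmul_eq_mul, ← div_eq_mul_inv]
  rw [sum_range_choose_div_choose_add]
  push_cast; ring

end Combinatorics

section Unanimity

variable {α : Type*} [DecidableEq α]

def unanimity (T S : Finset α) : ℝ := if T ⊆ S then 1 else 0

theorem sum_powerset_filter_eq_sum_mul_unanimity [Fintype α]
    (p : Finset α → Prop) [DecidablePred p] (f : Finset α → ℝ) (S : Finset α) :
    ∑ T ∈ S.powerset with p T, f T = ∑ T ∈ univ with p T, f T * unanimity T S := by
  simp only [unanimity, mul_ite, mul_one, mul_zero, ← sum_filter, filter_filter]
  congr 1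
  ext T
  simp [and_comm]

theorem unanimity_insert_sub {T S : Finset α} {i : α} (hi : i ∉ S) :
    unanimity T (insert i S) - unanimity T S = if i ∈ T ∧ T.erase i ⊆ S then 1 else 0 := by
  by_cases hiT : i ∈ T
  · have : ¬ T ⊆ S := fun h => hi (h hiT)
    simp [unanimity, subset_insert_iff, hiT, this]
  · simp [unanimity, subset_insert_iff, hiT]

theorem unanimity_eq_ite_card_inter (T A : Finset α) :
    unanimity T A = if #(A ∩ T) = #T then 1 else 0 := by
  have : T ⊆ A ↔ #(A ∩ T) = #T := by
    rw [← inter_eq_right, ← eq_iff_card_le_of_subset inter_subset_right]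
    exact ⟨fun h => le_antisymm (card_le_card inter_subset_right) h, fun h => h.ge⟩
  simp only [unanimity, this]

theorem unanimity_compl_eq_ite_card_inter [Fintype α] (T A : Finset α) :
    unanimity T Aᶜ = if #(A ∩ T) = 0 then 1 else 0 := by
  simp only [unanimity, subset_compl_iff_disjoint_right, disjoint_iff_inter_eq_empty, inter_comm T,
    card_eq_zero]

end Unanimity

section Shapley

variable {d : ℕ}

theorem shapley_sum_mul {ι : Type*} (I : Finset ι) (c : ι → ℝ) (f : ι → Finset (Fin d) → ℝ)
    (i : Fin d) :
    shapley d (fun S => ∑ T ∈ I, c T * f T S) i = ∑ T ∈ I, c T * shapley d (f T) i := by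
  simp only [shapley, ← sum_sub_distrib, ← mul_sub, sum_div, mul_div_assoc, mul_sum]
  rw [sum_comm]
  exact sum_congr rfl fun _ _ => sum_congr rfl fun _ _ => by ring

theorem shapley_unanimity (T : Finset (Fin d)) (i : Fin d) :
    shapley d (unanimity T) i = if i ∈ T then (#T : ℝ)⁻¹ else 0 := by
  set E := univ.erase i
  have hE : #E = d - 1 := by simp [E]
  have hmarg : ∀ S ∈ E.powerset,
      (unanimity T (insert i S) - unanimity T S) / ((d - 1).choose #S : ℝ) =
        if i ∈ T ∧ T.erase i ⊆ S then ((#E).choose #S : ℝ)⁻¹ else 0 := by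
    intro S hS
    rw [unanimity_insert_sub fun h => by simpa [E] using mem_powerset.1 hS h, hE]
    split_ifs <;> simp
  rw [shapley, sum_congr rfl hmarg]
  by_cases hiT : i ∈ T
  · have hTE : T.erase i ⊆ E := erase_subset_erase i (subset_univ T)
    have hd : (d : ℝ) ≠ 0 := by exact_mod_cast i.pos.ne'
    simp only [hiT, true_and, if_true]
    rw [← sum_filter, sum_powerset_filter_superset_inv_choose hTE, hE, card_erase_of_mem hiT,
      Nat.cast_pred i.pos, Nat.cast_pred (card_pos.2 ⟨i, hiT⟩), sub_add_cancel, sub_add_cancel]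
    field_simp
  · simp [hiT]

theorem sum_shapley_unanimity (T A : Finset (Fin d)) :
    ∑ i ∈ A, shapley d (unanimity T) i = #(A ∩ T) / #T := by
  simp only [shapley_unanimity, sum_ite_mem, sum_const, nsmul_eq_mul, div_eq_mul_inv]

theorem sum_shapley_unanimity_univ {T : Finset (Fin d)} (hT : T.Nonempty) :
    ∑ i, shapley d (unanimity T) i = unanimity T univ := by
  rw [sum_shapley_unanimity, univ_inter, div_self (by simpa using hT.ne_empty),
    unanimity, if_pos (subset_univ T)]

theorem unanimity_excess_compl {T : Finset (Fin d)} (hT : #T ≤ 2) (A : Finset (Fin d)) :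
    ∑ i ∈ Aᶜ, shapley d (unanimity T) i - unanimity T Aᶜ =
      ∑ i ∈ A, shapley d (unanimity T) i - unanimity T A := by
  have hcompl : #(Aᶜ ∩ T) = #T - #(A ∩ T) := by
    rw [inter_comm, ← sdiff_eq_inter_compl, card_sdiff]
  have hle : #(A ∩ T) ≤ #T := card_le_card inter_subset_right
  rw [sum_shapley_unanimity, sum_shapley_unanimity, hcompl, unanimity_compl_eq_ite_card_inter,
    unanimity_eq_ite_card_inter]
  generalize #(A ∩ T) = k at hle ⊢
  generalize #T = t at hT hle ⊢
  interval_cases t <;> interval_cases k <;> norm_num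

variable {𝒯 : Finset (Finset (Fin d))} {c : Finset (Fin d) → ℝ} {ν : Finset (Fin d) → ℝ}

theorem sum_shapley_univ_of_eq_sum_unanimity (h𝒯 : ∀ T ∈ 𝒯, T.Nonempty)
    (hν : ∀ S, ν S = ∑ T ∈ 𝒯, c T * unanimity T S) : ∑ i, shapley d ν i = ν univ := by
  obtain rfl : ν = _ := funext hν
  simp only [shapley_sum_mul]
  rw [sum_comm]
  exact sum_congr rfl fun T hT => by rw [← mul_sum, sum_shapley_unanimity_univ (h𝒯 T hT)]

theorem shapley_excess_compl_of_eq_sum_unanimity (h𝒯 : ∀ T ∈ 𝒯, #T ≤ 2)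
    (hν : ∀ S, ν S = ∑ T ∈ 𝒯, c T * unanimity T S) (A : Finset (Fin d)) :
    ∑ i ∈ Aᶜ, shapley d ν i - ν Aᶜ = ∑ i ∈ A, shapley d ν i - ν A := by
  obtain rfl : ν = _ := funext hν
  simp only [shapley_sum_mul]
  rw [sum_comm, sum_comm (s := A)]
  simp only [← mul_sum, ← sum_sub_distrib, ← mul_sub]
  exact sum_congr rfl fun T hT => by rw [unanimity_excess_compl (h𝒯 T hT)]

end Shapley

section LeastSquares

variable {m n : Type*} [Fintype m] [Fintype n]

theorem sum_sq_mulVec_sub_eq_add_of_transpose_mulVec_const (X : Matrix m n ℝ) (y : m → ℝ)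
    {ψ χ : n → ℝ} {Λ : ℝ} (hgrad : Xᵀ *ᵥ (X *ᵥ ψ - y) = fun _ => Λ)
    (hsum : ∑ i, χ i = ∑ i, ψ i) :
    ∑ ℓ, ((X *ᵥ χ) ℓ - y ℓ) ^ 2 =
      ∑ ℓ, ((X *ᵥ ψ) ℓ - y ℓ) ^ 2 + ∑ ℓ, (X *ᵥ (χ - ψ)) ℓ ^ 2 := by
  have hcross : (X *ᵥ ψ - y) ⬝ᵥ (X *ᵥ (χ - ψ)) = 0 := by
    rw [dotProduct_mulVec, ← mulVec_transpose, hgrad]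
    simp [dotProduct, ← mul_sum, hsum]
  have hsplit : ∀ ℓ, (X *ᵥ χ) ℓ - y ℓ = ((X *ᵥ ψ) ℓ - y ℓ) + (X *ᵥ (χ - ψ)) ℓ := by
    intro ℓ; simp [mulVec_sub]
  simp only [hsplit, add_sq, sum_add_distrib, mul_assoc, ← mul_sum]
  simp only [dotProduct, Pi.sub_apply] at hcross
  rw [hcross]; ring

theorem eq_of_sum_sq_mulVec_sub_le (X : Matrix m n ℝ) (y : m → ℝ) (hX : LinearIndependent ℝ Xᵀ)
    {ψ φ : n → ℝ} {Λ : ℝ} (hgrad : Xᵀ *ᵥ (X *ᵥ ψ - y) = fun _ => Λ)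
    (hsum : ∑ i, φ i = ∑ i, ψ i)
    (hmin : ∑ ℓ, ((X *ᵥ φ) ℓ - y ℓ) ^ 2 ≤ ∑ ℓ, ((X *ᵥ ψ) ℓ - y ℓ) ^ 2) :
    φ = ψ := by
  rw [sum_sq_mulVec_sub_eq_add_of_transpose_mulVec_const X y hgrad hsum] at hmin
  have hsq : ∑ ℓ, (X *ᵥ (φ - ψ)) ℓ ^ 2 = 0 :=
    le_antisymm (by linarith) (sum_nonneg fun ℓ _ => sq_nonneg _)
  have hzero : X *ᵥ (φ - ψ) = X *ᵥ 0 := by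
    ext ℓ
    simpa using (sum_eq_zero_iff_of_nonneg fun ℓ _ => sq_nonneg _).1 hsq ℓ (mem_univ ℓ)
  exact sub_eq_zero.1 (mulVec_injective_iff.2 hX hzero)

end LeastSquares

section PairedSample

variable {d r : ℕ} {S : Fin r × Bool → Finset (Fin d)} {w : Fin r × Bool → ℝ}

theorem linearIndependent_X1mat_transpose (h : LinearIndependent ℝ (X2mat d r S w)ᵀ) :
    LinearIndependent ℝ (X1mat d r S w)ᵀ := by
  let single : Fin d → {T : Finset (Fin d) // T.Nonempty ∧ #T ≤ 2} :=
    fun i => ⟨{i}, singleton_nonempty i, by simp⟩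
  have hinj : Function.Injective single :=
    fun i j hij => singleton_injective (congrArg Subtype.val hij)
  have hcols : (X2mat d r S w)ᵀ ∘ single = (X1mat d r S w)ᵀ := by
    ext i ℓ
    show X2mat d r S w ℓ (single i) = X1mat d r S w ℓ i
    simp [single, X1mat, X2mat]
  exact hcols ▸ h.comp single hinj

theorem X1mat_mulVec_sub_yvec_apply (ν : Finset (Fin d) → ℝ) (φ : Fin d → ℝ) (ℓ : Fin r × Bool) :
    (X1mat d r S w *ᵥ φ - yvec d r ν S w) ℓ = √(w ℓ) * (∑ i ∈ S ℓ, φ i - ν (S ℓ)) := by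
  simp [mulVec, dotProduct, X1mat, yvec, mul_sub, mul_sum]

theorem X1mat_transpose_mulVec_residual_eq_const
    (hpairS : ∀ j, S (j, true) = (S (j, false))ᶜ) (hpairw : ∀ j, w (j, true) = w (j, false))
    {ν : Finset (Fin d) → ℝ} {φ : Fin d → ℝ}
    (hsym : ∀ A, ∑ i ∈ Aᶜ, φ i - ν Aᶜ = ∑ i ∈ A, φ i - ν A) :
    (X1mat d r S w)ᵀ *ᵥ (X1mat d r S w *ᵥ φ - yvec d r ν S w) =
      fun _ => ∑ j, √(w (j, false)) ^ 2 * (∑ i ∈ S (j, false), φ i - ν (S (j, false))) := by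
  ext i
  simp only [mulVec, dotProduct, transpose_apply, X1mat_mulVec_sub_yvec_apply, X1mat,
    Fintype.sum_prod_type, Fintype.sum_bool]
  refine sum_congr rfl fun j _ => ?_
  rw [hpairS, hpairw, hsym]
  by_cases hi : i ∈ S (j, false) <;> simp [hi] <;> ring

end PairedSample

theorem paired_kernelshap_exact_on_order_two_games_general
    (d r : ℕ)
    (ν : Finset (Fin d) → ℝ)
    (hν2 : ∀ S : Finset (Fin d),
      ν S = ∑ T ∈ S.powerset.filter (fun T => 1 ≤ T.card ∧ T.card ≤ 2), moebius d ν T)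
    (S : Fin r × Bool → Finset (Fin d)) (w : Fin r × Bool → ℝ)
    (hpairS : ∀ j : Fin r, S (j, true) = (Finset.univ : Finset (Fin d)) \ S (j, false))
    (hpairw : ∀ j : Fin r, w (j, true) = w (j, false))
    (hrank : LinearIndependent ℝ (X2mat d r S w).transpose)
    (φ : Fin d → ℝ) (hφc : ∑ i, φ i = ν Finset.univ)
    (hφ : ∀ ψ : Fin d → ℝ, (∑ i, ψ i = ν Finset.univ) →
      ∑ ℓ, ((X1mat d r S w).mulVec φ ℓ - yvec d r ν S w ℓ) ^ 2 ≤
        ∑ ℓ, ((X1mat d r S w).mulVec ψ ℓ - yvec d r ν S w ℓ) ^ 2) :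
    ∀ i : Fin d, φ i = shapley d ν i := by
  have hν : ∀ A, ν A = ∑ T with 1 ≤ #T ∧ #T ≤ 2, moebius d ν T * unanimity T A := fun A =>
    (hν2 A).trans (sum_powerset_filter_eq_sum_mul_unanimity _ _ A)
  have hcompl : ∀ j, S (j, true) = (S (j, false))ᶜ := fun j =>
    (hpairS j).trans (compl_eq_univ_sdiff _).symm
  have hsym := shapley_excess_compl_of_eq_sum_unanimity (fun T hT => (mem_filter.1 hT).2.2) hν
  have heff :=
    sum_shapley_univ_of_eq_sum_unanimity (fun T hT => card_pos.1 (mem_filter.1 hT).2.1) hν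
  exact congrFun <| eq_of_sum_sq_mulVec_sub_le _ _ (linearIndependent_X1mat_transpose hrank)
    (X1mat_transpose_mulVec_residual_eq_const hcompl hpairw hsym) (hφc.trans heff.symm)
    (hφ _ heff)

/-- Paired KernelSHAP exactly recovers the Shapley values of games whose Möbius transform
vanishes above order 2. -/
theorem paired_kernelshap_exact_on_order_two_games
    (d r : ℕ) (hd : 2 ≤ d)
    (ν : Finset (Fin d) → ℝ) (hν0 : ν ∅ = 0)
    (hν2 : ∀ S : Finset (Fin d),
      ν S = ∑ T ∈ S.powerset.filter (fun T => 1 ≤ T.card ∧ T.card ≤ 2), moebius d ν T)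
    (S : Fin r × Bool → Finset (Fin d)) (w : Fin r × Bool → ℝ)
    (hw : ∀ ℓ, 0 < w ℓ)
    (hpairS : ∀ j : Fin r, S (j, true) = (Finset.univ : Finset (Fin d)) \ S (j, false))
    (hpairw : ∀ j : Fin r, w (j, true) = w (j, false))
    (hrank : LinearIndependent ℝ (X2mat d r S w).transpose)
    (φ : Fin d → ℝ) (hφc : ∑ i, φ i = ν Finset.univ)
    (hφ : ∀ ψ : Fin d → ℝ, (∑ i, ψ i = ν Finset.univ) →
      ∑ ℓ, ((X1mat d r S w).mulVec φ ℓ - yvec d r ν S w ℓ) ^ 2 ≤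
        ∑ ℓ, ((X1mat d r S w).mulVec ψ ℓ - yvec d r ν S w ℓ) ^ 2) :
    ∀ i : Fin d, φ i = shapley d ν i :=
  paired_kernelshap_exact_on_order_two_games_general d r ν hν2 S w hpairS hpairw hrank φ hφc hφ
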